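/- arXiv:2007.15168 — 3 statements merged into one kernel-verified Lean document; each statement's English description precedes it below -/
import Mathlib

section
/- Let (Ω, μ) be a finite measure space and let a group G act on Ω by measure-preserving transformations. Suppose there exist a subset S ⊆ G and ε' > 0 such that for every f ∈ L^2(Ω, μ) with ∫ f dμ = 0 one has sup_{γ ∈ S} ‖f∘γ^{-1} − f‖_2^2 ≥ ε' ‖f‖_2^2. Then there exists ε > 0 such that for every measurable A ⊆ Ω with μ(A) < μ(Ω)/2, sup_{γ ∈ S} μ(γA Δ A) ≥ ε · μ(A), where Δ may be replaced by the symmetric difference or by μ(γA \ A) up to constants. -/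
/-!
Apply the spectral gap to `f = 1_A - μ(A)/μ(Ω)`, which has mean zero. Since `μ(A) < μ(Ω)/2`,
`f ≥ 1/2` on `A`, so `‖f‖₂² ≥ μ(A)/4`. On the other hand `f ∘ γ⁻¹ - f = 1_{γA} - 1_A`, whose
squared norm is `μ(γA Δ A) = 2 μ(γA \ A)` because `γ` preserves `μ`. Hence `ε = ε'/8` works.
-/

open MeasureTheory Set
open scoped symmDiff Pointwise

section
variable {Ω : Type*} [MeasurableSpace Ω] {μ : Measure Ω}

lemma eLpNorm_indicator_one_sub_indicator_one_sq {s t : Set Ω} (hs : MeasurableSet s)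
    (ht : MeasurableSet t) :
    eLpNorm (s.indicator (1 : Ω → ℝ) - t.indicator 1) 2 μ ^ 2 = μ (s ∆ t) := by
  rw [eLpNorm_indicator_sub_indicator, Pi.one_def,
    eLpNorm_indicator_const (hs.symmDiff ht) two_ne_zero ENNReal.ofNat_ne_top,
    enorm_one, one_mul, ← ENNReal.rpow_natCast, ← ENNReal.rpow_mul]
  norm_num

lemma measure_symmDiff_eq_two_mul_sdiff [IsFiniteMeasure μ] {s t : Set Ω}
    (hs : MeasurableSet s) (ht : MeasurableSet t) (h : μ s = μ t) :
    μ (s ∆ t) = 2 * μ (s \ t) := by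
  rw [measure_symmDiff_eq hs.nullMeasurableSet ht.nullMeasurableSet,
    measure_sdiff_symm ht.nullMeasurableSet hs.nullMeasurableSet h.symm (measure_ne_top _ _),
    two_mul]

lemma ofReal_sq_mul_measure_le_eLpNorm_indicator_sub_const_sq {A : Set Ω}
    (hA : MeasurableSet A) (c : ℝ) :
    ENNReal.ofReal ((1 - c) ^ 2) * μ A ≤ eLpNorm (fun ω => A.indicator 1 ω - c) 2 μ ^ 2 := by
  have hle : eLpNorm (A.indicator fun _ => 1 - c) 2 μ ≤
      eLpNorm (fun ω => A.indicator 1 ω - c) 2 μ := by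
    refine eLpNorm_mono fun ω => ?_
    by_cases hω : ω ∈ A <;> simp [hω]
  calc ENNReal.ofReal ((1 - c) ^ 2) * μ A
      = eLpNorm (A.indicator fun _ => 1 - c) 2 μ ^ 2 := by
        rw [eLpNorm_indicator_const hA two_ne_zero ENNReal.ofNat_ne_top, mul_pow,
          ← ENNReal.rpow_natCast (_ ^ _), ← ENNReal.rpow_mul, Real.enorm_eq_ofReal_abs,
          ← ENNReal.ofReal_pow (abs_nonneg _), sq_abs]
        norm_num
    _ ≤ _ := by gcongr

lemma integral_indicator_one_sub_measureReal_div [IsFiniteMeasure μ] {A : Set Ω}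
    (hA : MeasurableSet A) :
    ∫ ω, (A.indicator 1 ω - μ.real A / μ.real univ) ∂μ = 0 := by
  rw [integral_sub ((integrable_indicator_iff hA).2 (integrable_const 1).integrableOn)
    (integrable_const _), integral_indicator_one hA, integral_const, smul_eq_mul,
    mul_div_cancel_of_imp', sub_self]
  intro h
  exact le_antisymm (h ▸ measureReal_mono (subset_univ A)) measureReal_nonneg

lemma measureReal_div_measureReal_univ_le_half [IsFiniteMeasure μ] {A : Set Ω}
    (hA : 2 * μ A ≤ μ univ) : μ.real A / μ.real univ ≤ 1 / 2 := by
  refine div_le_of_le_mul₀ measureReal_nonneg (by norm_num) ?_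
  have h := ENNReal.toReal_mono (measure_ne_top μ univ) hA
  rw [ENNReal.toReal_mul, ENNReal.toReal_ofNat] at h
  rw [measureReal_def, measureReal_def]
  linarith

end

lemma indicator_smul_set_one_apply {G Ω M : Type*} [Group G] [MulAction G Ω] [Zero M] [One M]
    (γ : G) (A : Set Ω) (ω : Ω) : (γ • A).indicator (1 : Ω → M) ω = A.indicator 1 (γ⁻¹ • ω) := by
  rw [← preimage_smul_inv]
  exact indicator_comp_right (g := (1 : Ω → M)) _

lemma eLpNorm_indicator_smul_sub_indicator_sq {G Ω : Type*} [Group G] [MulAction G Ω]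
    [MeasurableSpace Ω] {μ : Measure Ω} [IsFiniteMeasure μ] {γ : G}
    (hγ : MeasurePreserving (fun ω => γ⁻¹ • ω) μ μ) {A : Set Ω} (hA : MeasurableSet A) :
    eLpNorm ((γ • A).indicator (1 : Ω → ℝ) - A.indicator 1) 2 μ ^ 2 = 2 * μ (γ • A \ A) := by
  have hγA : MeasurableSet (γ • A) := preimage_smul_inv γ A ▸ hγ.measurable hA
  have hμ : μ (γ • A) = μ A := preimage_smul_inv γ A ▸ hγ.measure_preimage hA.nullMeasurableSet
  rw [eLpNorm_indicator_one_sub_indicator_one_sq hγA hA,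
    measure_symmDiff_eq_two_mul_sdiff hγA hA hμ]

theorem spectral_gap_sets {G Ω : Type*} [Group G] [MulAction G Ω] [MeasurableSpace Ω]
    (μ : Measure Ω) [IsFiniteMeasure μ]
    (hmp : ∀ γ : G, MeasurePreserving (fun ω => γ • ω) μ μ)
    (S : Set G) (ε' : ℝ) (hε' : 0 < ε')
    (hgap : ∀ f : Ω → ℝ, MemLp f 2 μ → (∫ ω, f ω ∂μ) = 0 →
      ENNReal.ofReal ε' * eLpNorm f 2 μ ^ 2 ≤
        ⨆ γ ∈ S, eLpNorm (fun ω => f (γ⁻¹ • ω) - f ω) 2 μ ^ 2) :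
    ∃ ε > (0 : ℝ), ∀ A : Set Ω, MeasurableSet A → 2 * μ A < μ univ →
      ENNReal.ofReal ε * μ A ≤ ⨆ γ ∈ S, μ ((fun ω => γ • ω) '' A \ A) := by
  refine ⟨ε' / 8, by positivity, fun A hA hA2 => ?_⟩
  set c := μ.real A / μ.real univ
  set f : Ω → ℝ := fun ω => A.indicator 1 ω - c
  have hf_mem : MemLp f 2 μ :=
    (memLp_indicator_const 2 hA 1 (Or.inr (measure_ne_top μ A))).sub (memLp_const c)
  have hf_norm : ENNReal.ofReal (1 / 4) * μ A ≤ eLpNorm f 2 μ ^ 2 :=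
    le_trans (by gcongr; nlinarith [measureReal_div_measureReal_univ_le_half hA2.le])
      (ofReal_sq_mul_measure_le_eLpNorm_indicator_sub_const_sq hA c)
  have hf_translate (γ : G) : eLpNorm (fun ω => f (γ⁻¹ • ω) - f ω) 2 μ ^ 2 =
      2 * μ ((fun ω => γ • ω) '' A \ A) := by
    have hf_sub : (fun ω => f (γ⁻¹ • ω) - f ω) = (γ • A).indicator 1 - A.indicator 1 := by
      ext ω
      simp only [f, Pi.sub_apply, sub_sub_sub_cancel_right, indicator_smul_set_one_apply]
    rw [hf_sub, eLpNorm_indicator_smul_sub_indicator_sq (hmp γ⁻¹) hA, image_smul]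
  have hdouble : (2 : ENNReal) * (ENNReal.ofReal (ε' / 8) * μ A) ≤
      2 * ⨆ γ ∈ S, μ ((fun ω => γ • ω) '' A \ A) :=
    calc (2 : ENNReal) * (ENNReal.ofReal (ε' / 8) * μ A)
        = ENNReal.ofReal ε' * (ENNReal.ofReal (1 / 4) * μ A) := by
          rw [← mul_assoc, ← mul_assoc, ← ENNReal.ofReal_ofNat 2,
            ← ENNReal.ofReal_mul (by norm_num), ← ENNReal.ofReal_mul hε'.le]
          ring_nf
      _ ≤ ENNReal.ofReal ε' * eLpNorm f 2 μ ^ 2 := by gcongr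
      _ ≤ ⨆ γ ∈ S, eLpNorm (fun ω => f (γ⁻¹ • ω) - f ω) 2 μ ^ 2 :=
          hgap f hf_mem (integral_indicator_one_sub_measureReal_div hA)
      _ = 2 * ⨆ γ ∈ S, μ ((fun ω => γ • ω) '' A \ A) := by
          simp only [hf_translate, ENNReal.mul_iSup]
  exact (ENNReal.mul_le_mul_iff_right two_ne_zero ENNReal.ofNat_ne_top).mp hdouble
end

section
/- Let (Ω, μ) be a finite measure space, p > 1, α > 1, δ > 0, and let f : Ω → [0, ∞) be measurable. Set A_k = {ω : f(ω) ≥ α^k} for k ∈ ℕ. If there exists N ∈ ℕ such that μ(A_k \ A_{k+1}) ≥ δ · μ(A_{k+1}) for all k ≥ N, and if α^p < 1 + δ, then f ∈ L^p(Ω, μ). -/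
open MeasureTheory Set

open scoped ENNReal

/-! The superlevel sets `A k = {α ^ k ≤ f}` satisfy `(1 + δ) μ (A (k + 1)) ≤ μ (A k)` for `k ≥ N`,
so `μ (A (N + m))` decays like `(1 + δ)⁻ᵐ`. Pointwise
`f ^ p ≤ (α ^ p) ^ N + ∑ₘ (α ^ p) ^ (N + m + 1) 𝟙_{A (N + m)}`, and integrating this bound gives a
geometric series of ratio `α ^ p / (1 + δ) < 1`. -/

namespace ENNReal

theorem le_inv_pow_mul_of_forall_mul_succ_le {u : ℕ → ℝ≥0∞} {c : ℝ≥0∞} (hc₀ : c ≠ 0)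
    (hc : c ≠ ∞) (h : ∀ k, c * u (k + 1) ≤ u k) (m : ℕ) : u m ≤ c⁻¹ ^ m * u 0 := by
  induction m with
  | zero => simp
  | succ m ih =>
    calc u (m + 1) ≤ c⁻¹ * u m := (mul_le_iff_le_inv hc₀ hc).1 (h m)
      _ ≤ c⁻¹ * (c⁻¹ ^ m * u 0) := by gcongr
      _ = c⁻¹ ^ (m + 1) * u 0 := by ring

theorem tsum_pow_mul_ne_top_of_forall_mul_succ_le {u : ℕ → ℝ≥0∞} {b c : ℝ≥0∞} (hbc : b < c)
    (hc : c ≠ ∞) (h : ∀ k, c * u (k + 1) ≤ u k) (hu : u 0 ≠ ∞) : ∑' m, b ^ m * u m ≠ ∞ := by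
  have hc₀ : c ≠ 0 := hbc.ne_bot
  have hratio : b / c < 1 := (ENNReal.div_lt_iff (.inl hc₀) (.inl hc)).2 (by simpa using hbc)
  refine ne_top_of_le_ne_top ?_ (ENNReal.tsum_le_tsum fun m ↦
    mul_le_mul_right (le_inv_pow_mul_of_forall_mul_succ_le hc₀ hc h m) (b ^ m))
  simp_rw [← mul_assoc, ← mul_pow, ← div_eq_mul_inv, ENNReal.tsum_mul_right]
  exact mul_ne_top (tsum_geometric_lt_top.2 hratio).ne hu

end ENNReal

theorem MeasureTheory.one_add_mul_measure_le {Ω : Type*} [MeasurableSpace Ω] {μ : Measure Ω}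
    {s t : Set Ω} (hts : t ⊆ s) (ht : NullMeasurableSet t μ) {d : ℝ≥0∞}
    (h : d * μ t ≤ μ (s \ t)) : (1 + d) * μ t ≤ μ s :=
  calc (1 + d) * μ t = μ t + d * μ t := by rw [add_mul, one_mul]
    _ ≤ μ t + μ (s \ t) := by gcongr
    _ = μ s := by rw [measure_add_sdiff ht, union_eq_right.2 hts]

theorem Real.rpow_le_pow_of_lt_pow {x α p : ℝ} (hx : 0 ≤ x) (hα : 0 ≤ α) (hp : 0 ≤ p) {k : ℕ}
    (h : x < α ^ k) : x ^ p ≤ (α ^ p) ^ k := by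
  rw [Real.rpow_pow_comm hα]
  exact Real.rpow_le_rpow hx h.le hp

theorem ENNReal.ofReal_rpow_le_pow_add_tsum_indicator {x α p : ℝ} (hx : 0 ≤ x) (hα : 1 < α)
    (hp : 0 ≤ p) (N : ℕ) :
    ENNReal.ofReal (x ^ p) ≤ ENNReal.ofReal (α ^ p) ^ N +
      ∑' m, {y | α ^ (N + m) ≤ y}.indicator (fun _ ↦ ENNReal.ofReal (α ^ p) ^ (N + m + 1)) x := by
  have hα₀ : 0 ≤ α := zero_le_one.trans hα.le
  rw [← ENNReal.ofReal_pow (Real.rpow_nonneg hα₀ p)]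
  rcases lt_or_ge x (α ^ N) with hxN | hxN
  · exact le_add_right (ENNReal.ofReal_le_ofReal (Real.rpow_le_pow_of_lt_pow hx hα₀ hp hxN))
  obtain ⟨m, hm, hm'⟩ := exists_nat_pow_near ((one_le_div (by positivity)).2 hxN) hα
  rw [le_div_iff₀ (by positivity), ← pow_add, add_comm] at hm
  rw [div_lt_iff₀ (by positivity), ← pow_add, add_comm, ← add_assoc] at hm'
  calc ENNReal.ofReal (x ^ p) ≤ ENNReal.ofReal (α ^ p) ^ (N + m + 1) := by
        rw [← ENNReal.ofReal_pow (Real.rpow_nonneg hα₀ p)]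
        exact ENNReal.ofReal_le_ofReal (Real.rpow_le_pow_of_lt_pow hx hα₀ hp hm')
    _ = {y | α ^ (N + m) ≤ y}.indicator (fun _ ↦ ENNReal.ofReal (α ^ p) ^ (N + m + 1)) x :=
        (indicator_of_mem (s := {y | α ^ (N + m) ≤ y}) hm fun _ ↦ _).symm
    _ ≤ _ := le_add_left (ENNReal.le_tsum m)

theorem geometric_levelsets_Lp_general {Ω : Type*} [MeasurableSpace Ω] (μ : Measure Ω)
    [IsFiniteMeasure μ] (p α δ : ℝ) (hp : 1 < p) (hα : 1 < α)
    (f : Ω → ℝ) (hf : Measurable f) (hf0 : ∀ ω, 0 ≤ f ω)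
    (N : ℕ)
    (hN : ∀ k, N ≤ k →
      ENNReal.ofReal δ * μ {ω | α ^ (k + 1) ≤ f ω} ≤
        μ ({ω | α ^ k ≤ f ω} \ {ω | α ^ (k + 1) ≤ f ω}))
    (hαp : α ^ p < 1 + δ) :
    ∫⁻ ω, ENNReal.ofReal (f ω ^ p) ∂μ < ⊤ := by
  set A : ℕ → Set Ω := fun k ↦ {ω | α ^ k ≤ f ω}
  set b := ENNReal.ofReal (α ^ p)
  have hA : ∀ k, MeasurableSet (A k) := fun k ↦ measurableSet_le measurable_const hf
  have hdecay : ∀ k, (1 + ENNReal.ofReal δ) * μ (A (N + k + 1)) ≤ μ (A (N + k)) := fun k ↦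
    one_add_mul_measure_le (fun ω hω ↦ (pow_le_pow_right₀ hα.le (N + k).le_succ).trans hω)
      (hA _).nullMeasurableSet (hN _ (N.le_add_right k))
  have hb : b < 1 + ENNReal.ofReal δ := by
    refine lt_of_lt_of_le ?_ (ENNReal.ofReal_one ▸ ENNReal.ofReal_add_le (p := 1) (q := δ))
    exact ENNReal.ofReal_lt_ofReal_iff'.2 ⟨hαp, (Real.rpow_nonneg (by linarith) p).trans_lt hαp⟩
  calc ∫⁻ ω, ENNReal.ofReal (f ω ^ p) ∂μ
      ≤ ∫⁻ ω, b ^ N + ∑' m, (A (N + m)).indicator (fun _ ↦ b ^ (N + m + 1)) ω ∂μ :=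
        lintegral_mono fun ω ↦
          ENNReal.ofReal_rpow_le_pow_add_tsum_indicator (hf0 ω) hα (by linarith) N
    _ = b ^ N * μ univ + b ^ (N + 1) * ∑' m, b ^ m * μ (A (N + m)) := by
        rw [lintegral_add_left measurable_const, lintegral_const,
          lintegral_tsum fun m ↦ (measurable_const.indicator (hA _)).aemeasurable,
          ← ENNReal.tsum_mul_left]
        simp_rw [lintegral_indicator_const (hA _), ← mul_assoc, ← pow_add, add_right_comm]
    _ < ⊤ := by
        refine ENNReal.add_lt_top.2 ⟨ENNReal.mul_lt_top (by simp [b]) (measure_lt_top μ univ), ?_⟩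
        refine ENNReal.mul_lt_top (by simp [b]) (lt_top_iff_ne_top.2 ?_)
        exact ENNReal.tsum_pow_mul_ne_top_of_forall_mul_succ_le hb (by simp) hdecay
          (measure_ne_top μ _)

theorem geometric_levelsets_Lp {Ω : Type*} [MeasurableSpace Ω] (μ : Measure Ω)
    [IsFiniteMeasure μ] (p α δ : ℝ) (hp : 1 < p) (hα : 1 < α) (hδ : 0 < δ)
    (f : Ω → ℝ) (hf : Measurable f) (hf0 : ∀ ω, 0 ≤ f ω)
    (N : ℕ)
    (hN : ∀ k, N ≤ k →
      ENNReal.ofReal δ * μ {ω | α ^ (k + 1) ≤ f ω} ≤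
        μ ({ω | α ^ k ≤ f ω} \ {ω | α ^ (k + 1) ≤ f ω}))
    (hαp : α ^ p < 1 + δ) :
    ∫⁻ ω, ENNReal.ofReal (f ω ^ p) ∂μ < ⊤ :=
  geometric_levelsets_Lp_general μ p α δ hp hα f hf hf0 N hN hαp
end

section
/- Let (Ω, μ) be a finite measure space, f : Ω → [0, ∞) measurable, and z > 0. Let T : Ω → Ω be measure-preserving with the property that μ({ω : f(ω) > z and f(Tω) ≤ z}) ≥ ε·μ({f > z}) for some ε > 0. Define ψ^{(z)} as in the paper: ψ^{(z)} = f + c_z on {f > z} and ψ^{(z)} = c_z on {f ≤ z}, with c_z = ∫_{{f ≤ z}} f dμ ≥ 0. Then ‖ψ^{(z)}∘T^{-1} − ψ^{(z)}‖_{L^1} ≥ z·ε·μ({ω : f(ω) > z}). -/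
/-!
Since `T` preserves `μ`, the `L¹` distance between `ψ ∘ T⁻¹` and `ψ` equals that between `ψ` and
`ψ ∘ T`. Wherever `f` crosses the level `z` downwards along `T`, the shift `c` cancels and
`ψ - ψ ∘ T = f > z`; the mixing hypothesis says these crossings carry at least an `ε`-fraction of
the mass of `{f > z}`.
-/

open MeasureTheory Set

open scoped ENNReal

lemma MeasureTheory.MeasurePreserving.lintegral_symm_apply_eq {Ω : Type*} [MeasurableSpace Ω]
    {μ : Measure Ω} {T : Ω ≃ᵐ Ω} (hT : MeasurePreserving T μ μ) (h : Ω → Ω → ℝ≥0∞) :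
    ∫⁻ ω, h (T.symm ω) ω ∂μ = ∫⁻ ω, h ω (T ω) ∂μ := by
  rw [← hT.lintegral_comp_emb T.measurableEmbedding]
  simp

lemma MeasureTheory.mul_measure_le_lintegral_of_forall_le {Ω : Type*} [MeasurableSpace Ω]
    {μ : Measure Ω} {s : Set Ω} (hs : MeasurableSet s) {g : Ω → ℝ≥0∞} {a : ℝ≥0∞}
    (hg : ∀ ω ∈ s, a ≤ g ω) :
    a * μ s ≤ ∫⁻ ω, g ω ∂μ :=
  calc a * μ s = ∫⁻ _ in s, a ∂μ := (setLIntegral_const s a).symm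
    _ ≤ ∫⁻ ω in s, g ω ∂μ := setLIntegral_mono' hs hg
    _ ≤ ∫⁻ ω, g ω ∂μ := setLIntegral_le_lintegral s g

lemma le_abs_sub_of_level_crossing {Ω : Type*} {f ψ : Ω → ℝ} {z c : ℝ}
    (hψ : ∀ ω, ψ ω = if z < f ω then f ω + c else c) {ω ω' : Ω}
    (hω : z < f ω) (hω' : f ω' ≤ z) :
    z ≤ |ψ ω - ψ ω'| := by
  rw [hψ ω, hψ ω', if_pos hω, if_neg hω'.not_gt, add_sub_cancel_right]
  exact hω.le.trans (le_abs_self _)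

theorem psi_translate_lower_bound_general {Ω : Type*} [MeasurableSpace Ω] (μ : Measure Ω)
    (f : Ω → ℝ) (hf : Measurable f)
    (z : ℝ) (hz : 0 < z) (T : Ω ≃ᵐ Ω) (hT : MeasurePreserving T μ μ)
    (ε : ℝ)
    (hmix : ENNReal.ofReal ε * μ {ω | z < f ω} ≤ μ {ω | z < f ω ∧ f (T ω) ≤ z})
    (c : ℝ)
    (ψ : Ω → ℝ) (hψ : ∀ ω, ψ ω = if z < f ω then f ω + c else c) :
    ENNReal.ofReal (z * ε) * μ {ω | z < f ω} ≤
      ∫⁻ ω, ENNReal.ofReal |ψ (T.symm ω) - ψ ω| ∂μ := by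
  have hcross : MeasurableSet {ω | z < f ω ∧ f (T ω) ≤ z} :=
    (measurableSet_lt measurable_const hf).inter
      (measurableSet_le (hf.comp T.measurable) measurable_const)
  rw [hT.lintegral_symm_apply_eq fun ω ω' => ENNReal.ofReal |ψ ω - ψ ω'|,
    ENNReal.ofReal_mul hz.le, mul_assoc]
  calc ENNReal.ofReal z * (ENNReal.ofReal ε * μ {ω | z < f ω})
      ≤ ENNReal.ofReal z * μ {ω | z < f ω ∧ f (T ω) ≤ z} := by gcongr
    _ ≤ ∫⁻ ω, ENNReal.ofReal |ψ ω - ψ (T ω)| ∂μ :=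
      mul_measure_le_lintegral_of_forall_le hcross fun _ hω =>
        ENNReal.ofReal_le_ofReal (le_abs_sub_of_level_crossing hψ hω.1 hω.2)

theorem psi_translate_lower_bound {Ω : Type*} [MeasurableSpace Ω] (μ : Measure Ω)
    [IsFiniteMeasure μ] (f : Ω → ℝ) (hf : Measurable f) (hf0 : ∀ ω, 0 ≤ f ω)
    (z : ℝ) (hz : 0 < z) (T : Ω ≃ᵐ Ω) (hT : MeasurePreserving T μ μ)
    (ε : ℝ) (hε : 0 < ε)
    (hmix : ENNReal.ofReal ε * μ {ω | z < f ω} ≤ μ {ω | z < f ω ∧ f (T ω) ≤ z})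
    (c : ℝ) (hc : c = ∫ ω in {ω | f ω ≤ z}, f ω ∂μ)
    (ψ : Ω → ℝ) (hψ : ∀ ω, ψ ω = if z < f ω then f ω + c else c) :
    ENNReal.ofReal (z * ε) * μ {ω | z < f ω} ≤
      ∫⁻ ω, ENNReal.ofReal |ψ (T.symm ω) - ψ ω| ∂μ :=
  psi_translate_lower_bound_general μ f hf z hz T hT ε hmix c ψ hψ
end
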